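/- Convergence of Mano without momentum (deterministic setting). Let f : ℝ^{d×m} → ℝ be L-smooth and bounded below by f_inf, let γ > 0 and C > 0, and let T ∈ ℕ. Run Mano without momentum for T+1 iterations with step size η = C/√(T+1): g_t = ∇f(θ_t), v_t the column-wise tangent projection of g_t at θ_t, v̂_t its column-normalization, θ_{t+1} = θ_t − η√m · v̂_t. Assume for all t ≤ T that every column of θ_t and of v_t is nonzero and ‖v_t^{(j)}‖₂ ≥ γ ‖g_t^{(j)}‖₂ for every column j (i.e., sin(φ_t^{(j)}) ≥ γ for the angle φ_t^{(j)} between g_t^{(j)} and θ_t^{(j)}). Then min_{0 ≤ t ≤ T} ‖∇f(θ_t)‖_F ≤ (C₁ + C₂)/√(T+1), where C₁ = (f(θ_0) − f_inf)/(m^{1/2} γ C) and C₂ = L m^{3/2} C/(2γ). -/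

import Mathlib

open scoped BigOperators InnerProductSpace

/-- Euclidean norm of the `j`-th column of a matrix in
`ℝ^{d×m} = EuclideanSpace ℝ (Fin d × Fin m)`. -/
noncomputable def colNormE {d m : ℕ} (A : EuclideanSpace ℝ (Fin d × Fin m)) (j : Fin m) : ℝ :=
  Real.sqrt (∑ i, A (i, j) ^ 2)

/-- Column-normalization: each column is divided by its Euclidean norm. -/
noncomputable def colNormalizeE {d m : ℕ} (A : EuclideanSpace ℝ (Fin d × Fin m)) :
    EuclideanSpace ℝ (Fin d × Fin m) :=
  WithLp.toLp 2 (fun p => A p / colNormE A p.2)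

/-- Column-wise tangent projection of `g` at `θ`:
`v^{(j)} = g^{(j)} − ⟨g^{(j)}, θ̂^{(j)}⟩ θ̂^{(j)}` with `θ̂` the column-normalization of `θ`. -/
noncomputable def tangentProjE {d m : ℕ} (θ g : EuclideanSpace ℝ (Fin d × Fin m)) :
    EuclideanSpace ℝ (Fin d × Fin m) :=
  WithLp.toLp 2 (fun p => g p - (∑ i, g (i, p.2) * colNormalizeE θ (i, p.2)) * colNormalizeE θ p)

/-!
Along the update direction `v̂ = colNormalizeE v` one has `⟨g, v̂⟩ = ∑ⱼ ‖v^{(j)}‖`, because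
`⟨g^{(j)}, v^{(j)}⟩ = ‖v^{(j)}‖²` for the tangent projection `v`; the angle condition and
`‖g‖_F ≤ ∑ⱼ ‖g^{(j)}‖` bound this below by `γ ‖g‖_F`, while `‖v̂‖_F² = m`. Hence `L`-smoothness
gives the descent `f(θ_{t+1}) ≤ f(θ_t) − η√m γ ‖g_t‖_F + L η² m² / 2`. Summing over `t`
telescopes, `f ≥ f_inf` bounds the sum, and the minimum is at most the average.
-/

lemma sum_mul_sub_proj_eq_sum_sq {ι : Type*} [Fintype ι] (g u : ι → ℝ)
    (hu : ∑ i, u i ^ 2 = 1) :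
    ∑ i, g i * (g i - (∑ k, g k * u k) * u i) = ∑ i, (g i - (∑ k, g k * u k) * u i) ^ 2 := by
  set c := ∑ k, g k * u k
  have hterm : ∀ i, g i * (g i - c * u i) - (g i - c * u i) ^ 2 =
      c * (g i * u i) - c ^ 2 * u i ^ 2 := fun i => by ring
  rw [← sub_eq_zero, ← Finset.sum_sub_distrib]
  simp only [hterm, Finset.sum_sub_distrib, ← Finset.mul_sum, hu]
  ring

section Columns

variable {d m : ℕ}

lemma sq_colNormE (A : EuclideanSpace ℝ (Fin d × Fin m)) (j : Fin m) :
    colNormE A j ^ 2 = ∑ i, A (i, j) ^ 2 :=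
  Real.sq_sqrt (Finset.sum_nonneg fun _ _ => sq_nonneg _)

lemma sum_sq_colNormalizeE (A : EuclideanSpace ℝ (Fin d × Fin m)) {j : Fin m}
    (hA : colNormE A j ≠ 0) :
    ∑ i, colNormalizeE A (i, j) ^ 2 = 1 := by
  simp only [colNormalizeE, WithLp.ofLp_toLp, div_pow]
  rw [← Finset.sum_div, ← sq_colNormE, div_self (pow_ne_zero 2 hA)]

lemma norm_sq_eq_sum_sq_colNormE (A : EuclideanSpace ℝ (Fin d × Fin m)) :
    ‖A‖ ^ 2 = ∑ j, colNormE A j ^ 2 := by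
  rw [EuclideanSpace.norm_eq, Real.sq_sqrt (Finset.sum_nonneg fun _ _ => sq_nonneg _),
    Fintype.sum_prod_type_right]
  simp only [sq_colNormE, Real.norm_eq_abs, sq_abs]

lemma norm_le_sum_colNormE (A : EuclideanSpace ℝ (Fin d × Fin m)) :
    ‖A‖ ≤ ∑ j, colNormE A j := by
  have hsum_nonneg : 0 ≤ ∑ j, colNormE A j :=
    Finset.sum_nonneg fun _ _ => Real.sqrt_nonneg _
  refine le_of_sq_le_sq ?_ hsum_nonneg
  rw [norm_sq_eq_sum_sq_colNormE]
  exact Finset.sum_sq_le_sq_sum_of_nonneg fun _ _ => Real.sqrt_nonneg _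

lemma norm_sq_colNormalizeE {A : EuclideanSpace ℝ (Fin d × Fin m)}
    (hA : ∀ j, colNormE A j ≠ 0) :
    ‖colNormalizeE A‖ ^ 2 = m := by
  simp [norm_sq_eq_sum_sq_colNormE, sq_colNormE, sum_sq_colNormalizeE A (hA _)]

lemma sum_mul_tangentProjE (θ g : EuclideanSpace ℝ (Fin d × Fin m)) {j : Fin m}
    (hθ : colNormE θ j ≠ 0) :
    ∑ i, g (i, j) * tangentProjE θ g (i, j) = colNormE (tangentProjE θ g) j ^ 2 := by
  rw [sq_colNormE]
  exact sum_mul_sub_proj_eq_sum_sq (fun i => g (i, j)) (fun i => colNormalizeE θ (i, j))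
    (sum_sq_colNormalizeE θ hθ)

lemma inner_colNormalizeE_tangentProjE {θ g : EuclideanSpace ℝ (Fin d × Fin m)}
    (hθ : ∀ j, colNormE θ j ≠ 0) (hv : ∀ j, colNormE (tangentProjE θ g) j ≠ 0) :
    ⟪g, colNormalizeE (tangentProjE θ g)⟫_ℝ = ∑ j, colNormE (tangentProjE θ g) j := by
  rw [PiLp.inner_apply, Fintype.sum_prod_type_right]
  refine Finset.sum_congr rfl fun j _ => ?_
  have hcol : ∑ i, ⟪g (i, j), colNormalizeE (tangentProjE θ g) (i, j)⟫_ℝ =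
      (∑ i, g (i, j) * tangentProjE θ g (i, j)) / colNormE (tangentProjE θ g) j := by
    rw [Finset.sum_div]
    refine Finset.sum_congr rfl fun i _ => ?_
    simp [colNormalizeE, mul_div_assoc, mul_comm]
  rw [hcol, sum_mul_tangentProjE θ g (hθ j), sq, mul_div_cancel_right₀ _ (hv j)]

lemma mano_step_descent {f : EuclideanSpace ℝ (Fin d × Fin m) → ℝ}
    {θ g : EuclideanSpace ℝ (Fin d × Fin m)} {L γ s : ℝ} (hγ : 0 ≤ γ) (hs : 0 ≤ s)
    (hsmooth : f (θ - s • colNormalizeE (tangentProjE θ g)) ≤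
      f θ + ⟪g, θ - s • colNormalizeE (tangentProjE θ g) - θ⟫_ℝ +
        L / 2 * ‖θ - s • colNormalizeE (tangentProjE θ g) - θ‖ ^ 2)
    (hθ : ∀ j, colNormE θ j ≠ 0) (hv : ∀ j, colNormE (tangentProjE θ g) j ≠ 0)
    (hsin : ∀ j, γ * colNormE g j ≤ colNormE (tangentProjE θ g) j) :
    s * γ * ‖g‖ ≤ f θ - f (θ - s • colNormalizeE (tangentProjE θ g)) + L / 2 * (s ^ 2 * m) := by
  have hinner : γ * ‖g‖ ≤ ⟪g, colNormalizeE (tangentProjE θ g)⟫_ℝ :=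
    calc γ * ‖g‖ ≤ ∑ j, γ * colNormE g j := by
          rw [← Finset.mul_sum]; exact mul_le_mul_of_nonneg_left (norm_le_sum_colNormE g) hγ
      _ ≤ ∑ j, colNormE (tangentProjE θ g) j := Finset.sum_le_sum fun j _ => hsin j
      _ = _ := (inner_colNormalizeE_tangentProjE hθ hv).symm
  rw [sub_sub_cancel_left, inner_neg_right, real_inner_smul_right, norm_neg, norm_smul,
    mul_pow, norm_sq_colNormalizeE hv, Real.norm_eq_abs, sq_abs] at hsmooth
  nlinarith [mul_le_mul_of_nonneg_left hinner hs]

end Columns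

lemma inf'_range_le_of_descent {a b : ℕ → ℝ} {c e lo : ℝ} (T : ℕ) (hc : 0 < c)
    (hstep : ∀ t ≤ T, c * b t ≤ a t - a (t + 1) + e) (hlo : lo ≤ a (T + 1)) :
    (Finset.range (T + 1)).inf' (Finset.nonempty_range_iff.mpr (Nat.succ_ne_zero T)) b ≤
      ((a 0 - lo) / (T + 1) + e) / c := by
  set M := (Finset.range (T + 1)).inf' (Finset.nonempty_range_iff.mpr (Nat.succ_ne_zero T)) b
  have hsum : ∑ _t ∈ Finset.range (T + 1), c * M ≤
      ∑ t ∈ Finset.range (T + 1), (a t - a (t + 1) + e) := by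
    refine Finset.sum_le_sum fun t ht => le_trans ?_ (hstep t (Nat.lt_succ_iff.mp
      (Finset.mem_range.mp ht)))
    exact mul_le_mul_of_nonneg_left (Finset.inf'_le _ ht) hc.le
  rw [Finset.sum_add_distrib, Finset.sum_range_sub' a] at hsum
  simp only [Finset.sum_const, Finset.card_range, nsmul_eq_mul, Nat.cast_add,
    Nat.cast_one] at hsum
  rw [le_div_iff₀ hc, div_add' _ _ _ (by positivity), le_div_iff₀ (by positivity)]
  nlinarith

lemma mano_bound_eq {m : ℕ} (hm : 0 < m) {γ C : ℝ} (hγ : 0 < γ) (hC : 0 < C) (T : ℕ) (D L : ℝ) :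
    (D / (T + 1) + L / 2 * ((C / Real.sqrt (T + 1) * Real.sqrt m) ^ 2 * m)) /
        (C / Real.sqrt (T + 1) * Real.sqrt m * γ) =
      (D / (Real.sqrt m * γ * C) + L * ((m : ℝ) * Real.sqrt m) * C / (2 * γ)) /
        Real.sqrt (T + 1) := by
  have hT : Real.sqrt ((T : ℝ) + 1) ^ 2 = T + 1 := Real.sq_sqrt (by positivity)
  have hm' : Real.sqrt (m : ℝ) ^ 2 = m := Real.sq_sqrt (Nat.cast_nonneg m)
  have : 0 < Real.sqrt (m : ℝ) := Real.sqrt_pos.mpr (Nat.cast_pos.mpr hm)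
  have : 0 < Real.sqrt ((T : ℝ) + 1) := Real.sqrt_pos.mpr (by positivity)
  field_simp
  rw [hT, hm']
  ring

theorem mano_convergence_deterministic_general {d m : ℕ} (L finf γ C : ℝ)
    (hγ : 0 < γ) (hC : 0 < C) (T : ℕ)
    (f : EuclideanSpace ℝ (Fin d × Fin m) → ℝ)
    (hsmooth : ∀ x y : EuclideanSpace ℝ (Fin d × Fin m),
      f y ≤ f x + ⟪gradient f x, y - x⟫_ℝ + L / 2 * ‖y - x‖ ^ 2)
    (hbound : ∀ x, finf ≤ f x)
    (η : ℝ) (hη : η = C / Real.sqrt (T + 1))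
    (θ : ℕ → EuclideanSpace ℝ (Fin d × Fin m))
    (hupd : ∀ t ≤ T, θ (t + 1) =
      θ t - (η * Real.sqrt m) • colNormalizeE (tangentProjE (θ t) (gradient f (θ t))))
    (hθcol : ∀ t ≤ T, ∀ j : Fin m, colNormE (θ t) j ≠ 0)
    (hvcol : ∀ t ≤ T, ∀ j : Fin m,
      colNormE (tangentProjE (θ t) (gradient f (θ t))) j ≠ 0)
    (hsin : ∀ t ≤ T, ∀ j : Fin m,
      γ * colNormE (gradient f (θ t)) j ≤
        colNormE (tangentProjE (θ t) (gradient f (θ t))) j) :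
    (Finset.range (T + 1)).inf' (Finset.nonempty_range_iff.mpr (Nat.succ_ne_zero T))
        (fun t => ‖gradient f (θ t)‖) ≤
      ((f (θ 0) - finf) / (Real.sqrt m * γ * C) +
        L * ((m : ℝ) * Real.sqrt m) * C / (2 * γ)) / Real.sqrt (T + 1) := by
  rcases Nat.eq_zero_or_pos m with rfl | hm
  · refine (Finset.inf'_le _ (Finset.mem_range.mpr T.succ_pos)).trans ?_
    simpa using norm_le_sum_colNormE (gradient f (θ 0))
  have hs : 0 ≤ η * Real.sqrt m := by rw [hη]; positivity
  have hdescent : ∀ t ≤ T, η * Real.sqrt m * γ * ‖gradient f (θ t)‖ ≤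
      f (θ t) - f (θ (t + 1)) + L / 2 * ((η * Real.sqrt m) ^ 2 * m) := fun t ht => by
    rw [hupd t ht]
    exact mano_step_descent hγ.le hs (hsmooth _ _) (hθcol t ht) (hvcol t ht) (hsin t ht)
  have hc : 0 < η * Real.sqrt m * γ := by
    have : 0 < Real.sqrt m := Real.sqrt_pos.mpr (Nat.cast_pos.mpr hm)
    rw [hη]; positivity
  refine (inf'_range_le_of_descent T hc hdescent (hbound _)).trans_eq ?_
  rw [hη, mano_bound_eq hm hγ hC]

/-- convergence of Mano without momentum, deterministic setting: for
`L`-smooth `f` bounded below by `finf`, step size `η = C/√(T+1)`, Mano iterates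
`θ_{t+1} = θ_t − η√m · v̂_t` with nonzero columns and `‖v_t^{(j)}‖₂ ≥ γ‖g_t^{(j)}‖₂`
(i.e. `sin(φ_t^{(j)}) ≥ γ`), we have
`min_{0≤t≤T} ‖∇f(θ_t)‖_F ≤ (C₁ + C₂)/√(T+1)` with
`C₁ = (f(θ_0) − finf)/(m^{1/2} γ C)` and `C₂ = L m^{3/2} C/(2γ)`. -/
theorem mano_convergence_deterministic {d m : ℕ} (L finf γ C : ℝ)
    (hγ : 0 < γ) (hC : 0 < C) (T : ℕ)
    (f : EuclideanSpace ℝ (Fin d × Fin m) → ℝ)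
    (hdiff : Differentiable ℝ f)
    (hsmooth : ∀ x y : EuclideanSpace ℝ (Fin d × Fin m),
      f y ≤ f x + ⟪gradient f x, y - x⟫_ℝ + L / 2 * ‖y - x‖ ^ 2)
    (hbound : ∀ x, finf ≤ f x)
    (η : ℝ) (hη : η = C / Real.sqrt (T + 1))
    (θ : ℕ → EuclideanSpace ℝ (Fin d × Fin m))
    (hupd : ∀ t ≤ T, θ (t + 1) =
      θ t - (η * Real.sqrt m) • colNormalizeE (tangentProjE (θ t) (gradient f (θ t))))
    (hθcol : ∀ t ≤ T, ∀ j : Fin m, colNormE (θ t) j ≠ 0)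
    (hvcol : ∀ t ≤ T, ∀ j : Fin m,
      colNormE (tangentProjE (θ t) (gradient f (θ t))) j ≠ 0)
    (hsin : ∀ t ≤ T, ∀ j : Fin m,
      γ * colNormE (gradient f (θ t)) j ≤
        colNormE (tangentProjE (θ t) (gradient f (θ t))) j) :
    (Finset.range (T + 1)).inf' (Finset.nonempty_range_iff.mpr (Nat.succ_ne_zero T))
        (fun t => ‖gradient f (θ t)‖) ≤
      ((f (θ 0) - finf) / (Real.sqrt m * γ * C) +
        L * ((m : ℝ) * Real.sqrt m) * C / (2 * γ)) / Real.sqrt (T + 1) :=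
  mano_convergence_deterministic_general L finf γ C hγ hC T f hsmooth hbound η hη θ hupd hθcol hvcol
    hsin
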